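/- arXiv:2410.19012 — 3 statements merged into one kernel-verified Lean document; each statement's English description precedes it below -/
import Mathlib

section
/- Let α > 1, ε ≥ 0, and let M be a mechanism from D^n to probability distributions on R satisfying the single-step Rényi-DP consequence: for every pair of neighboring datasets d̃, d̃' and every event E ⊆ R, Pr[M(d̃) ∈ E] ≤ e^{ε(1−1/α)}·(Pr[M(d̃') ∈ E])^{1−1/α}. Then for any datasets d, d' with Hamming distance |d−d'|_H = Δ and any event E ⊆ R, Pr[M(d) ∈ E] ≤ e^{ε·Σ_{i=1}^{Δ}(1−1/α)^i}·(Pr[M(d') ∈ E])^{(1−1/α)^Δ}. -/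
/-!
Join `d` to `d'` by a path of `Δ` neighbouring datasets and induct along it. Writing
`c = 1 - 1/α ≥ 0`, one step turns a bound `K ^ S * p ^ (c ^ k)` for the next dataset into
`K ^ c * (K ^ S * p ^ (c ^ k)) ^ c = K ^ (c + S * c) * p ^ (c ^ (k + 1))`, so the exponent of the
probability is raised to `c ^ Δ` while the privacy cost accumulates to the geometric sum
`∑_{i=1}^{Δ} c ^ i`; with `K = e ^ ε` this is the claimed bound.
-/

open MeasureTheory Finset
open scoped ENNReal

theorem sum_Icc_one_pow_succ {R : Type*} [CommSemiring R] (c : R) (k : ℕ) :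
    ∑ i ∈ Icc 1 (k + 1), c ^ i = c + (∑ i ∈ Icc 1 k, c ^ i) * c := by
  induction k with
  | zero => simp
  | succ k ih =>
    conv_lhs => rw [sum_Icc_succ_top (by omega), ih]
    rw [sum_Icc_succ_top (by omega)]
    ring

theorem exists_hammingDist_eq_one_of_hammingDist_eq_succ {ι : Type*} [Fintype ι]
    {β : ι → Type*} [∀ i, DecidableEq (β i)] {x y : ∀ i, β i} {k : ℕ}
    (h : hammingDist x y = k + 1) :
    ∃ z, hammingDist x z = 1 ∧ hammingDist z y = k := by
  classical
  obtain ⟨i, hi⟩ := Function.ne_iff.mp (hammingDist_pos.mp (by omega : 0 < hammingDist x y))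
  refine ⟨Function.update x i (y i), ?_, ?_⟩
  · have hdiff : ({j | x j ≠ Function.update x i (y i) j} : Finset ι) = {i} := by
      ext j
      rcases eq_or_ne j i with rfl | hji <;> simp [*]
    rw [hammingDist, hdiff, card_singleton]
  · have hdiff : ({j | Function.update x i (y i) j ≠ y j} : Finset ι) =
        ({j | x j ≠ y j} : Finset ι).erase i := by
      ext j
      rcases eq_or_ne j i with rfl | hji <;> simp [*]
    rw [hammingDist, hdiff, card_erase_of_mem (by simpa using hi), ← hammingDist, h,
      Nat.add_sub_cancel]

theorem le_rpow_sum_mul_rpow_pow_of_hammingDist_eq {ι : Type*} [Fintype ι] {β : ι → Type*}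
    [∀ i, DecidableEq (β i)] {p : (∀ i, β i) → ℝ≥0∞} {K : ℝ≥0∞} {c : ℝ} (hc : 0 ≤ c)
    (hstep : ∀ x y, hammingDist x y = 1 → p x ≤ K ^ c * p y ^ c)
    {x y : ∀ i, β i} {k : ℕ} (h : hammingDist x y = k) :
    p x ≤ K ^ (∑ i ∈ Icc 1 k, c ^ i) * p y ^ (c ^ k) := by
  induction k generalizing x with
  | zero => simp [hammingDist_eq_zero.mp h]
  | succ k ih =>
    obtain ⟨z, hxz, hzy⟩ := exists_hammingDist_eq_one_of_hammingDist_eq_succ h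
    have hS : 0 ≤ ∑ i ∈ Icc 1 k, c ^ i := sum_nonneg fun i _ => pow_nonneg hc i
    calc p x ≤ K ^ c * p z ^ c := hstep x z hxz
      _ ≤ K ^ c * (K ^ (∑ i ∈ Icc 1 k, c ^ i) * p y ^ (c ^ k)) ^ c := by
        gcongr; exact ih hzy
      _ = K ^ (∑ i ∈ Icc 1 (k + 1), c ^ i) * p y ^ (c ^ (k + 1)) := by
        rw [ENNReal.mul_rpow_of_nonneg _ _ hc, ← ENNReal.rpow_mul, ← ENNReal.rpow_mul,
          ← mul_assoc, ← ENNReal.rpow_add_of_nonneg _ _ hc (mul_nonneg hS hc),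
          sum_Icc_one_pow_succ, pow_succ]

theorem stmt_3_general {D R : Type*} [DecidableEq D] [MeasurableSpace R] {n : ℕ}
    (M : (Fin n → D) → Measure R)
    (α ε : ℝ) (hα : 1 < α)
    (hRDP : ∀ d d' : Fin n → D, hammingDist d d' = 1 →
      ∀ E : Set R, M d E ≤ ENNReal.ofReal (Real.exp (ε * (1 - 1/α))) * (M d' E) ^ (1 - 1/α))
    (Δ : ℕ) (d d' : Fin n → D) (hdist : hammingDist d d' = Δ) :
    ∀ E : Set R,
      M d E ≤ ENNReal.ofReal (Real.exp (ε * ∑ i ∈ Finset.Icc 1 Δ, (1 - 1/α) ^ i)) *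
        (M d' E) ^ ((1 - 1/α) ^ Δ) := by
  intro E
  have hc : 0 ≤ 1 - 1 / α := sub_nonneg.mpr ((div_le_one (by linarith)).mpr hα.le)
  have hexp (r : ℝ) : ENNReal.ofReal (Real.exp ε) ^ r = ENNReal.ofReal (Real.exp (ε * r)) := by
    rw [ENNReal.ofReal_rpow_of_pos (Real.exp_pos ε), Real.exp_mul]
  simp only [← hexp] at hRDP ⊢
  exact le_rpow_sum_mul_rpow_pow_of_hammingDist_eq hc (fun x y h => hRDP x y h E) hdist

/-- group privacy for Rényi DP, Proposition 2.4, first part.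
If for all neighboring datasets `Pr[M(d̃) ∈ E] ≤ e^{ε(1-1/α)}·(Pr[M(d̃') ∈ E])^{1-1/α}`,
then for datasets at Hamming distance `Δ`,
`Pr[M(d) ∈ E] ≤ e^{ε·Σ_{i=1}^{Δ}(1-1/α)^i}·(Pr[M(d') ∈ E])^{(1-1/α)^Δ}`. -/
theorem stmt_3 {D R : Type*} [DecidableEq D] [MeasurableSpace R] {n : ℕ}
    (M : (Fin n → D) → Measure R)
    (hprob : ∀ d, IsProbabilityMeasure (M d))
    (α ε : ℝ) (hα : 1 < α) (hε : 0 ≤ ε)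
    (hRDP : ∀ d d' : Fin n → D, hammingDist d d' = 1 →
      ∀ E : Set R, M d E ≤ ENNReal.ofReal (Real.exp (ε * (1 - 1/α))) * (M d' E) ^ (1 - 1/α))
    (Δ : ℕ) (d d' : Fin n → D) (hdist : hammingDist d d' = Δ) :
    ∀ E : Set R,
      M d E ≤ ENNReal.ofReal (Real.exp (ε * ∑ i ∈ Finset.Icc 1 Δ, (1 - 1/α) ^ i)) *
        (M d' E) ^ ((1 - 1/α) ^ Δ) :=
  stmt_3_general M α ε hα hRDP Δ d d' hdist
end

section
/- (Extension Lemma) Let ε ≥ 0, let B ⊆ D^n be a set of datasets, and let M_B assign to each d ∈ B a probability distribution on a countable output space R such that for all d, d' ∈ B and all events S ⊆ R, Pr[M_B(d) ∈ S] ≤ e^{ε·|d−d'|_H}·Pr[M_B(d') ∈ S]. Then there exists a mechanism M defined on all of D^n which is 2ε-differentially private and such that for every d ∈ B, M(d) has the same distribution as M_B(d). -/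
/-!
Extend first without normalising: for a multiplicative "distance" `w` (here `w d d' = e^{ε|d-d'|_H}`)
put `ν(d){r} := inf_{b ∈ B} w(d, b) · M_B(b){r}`. This infimum of `w`-Lipschitz functions is again
`w`-Lipschitz in `d`, and on `B` it recovers `M_B` because `M_B` itself is `w`-Lipschitz there. Hence
`ν(d) ≤ e^{ε|d-d'|_H} ν(d')`, and normalising `ν(d)` to a probability costs one more factor of the same
size, giving `e^{2ε}` between neighbours.
-/

open MeasureTheory
open scoped ENNReal

section Normalize

variable {α : Type*} [MeasurableSpace α]

theorem inv_measure_univ_le_mul {μ ν : Measure α} {b : ℝ≥0∞} (hb₀ : b ≠ 0) (hb : b ≠ ∞)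
    (hνμ : ν ≤ b • μ) : (μ Set.univ)⁻¹ ≤ b * (ν Set.univ)⁻¹ := by
  rw [ENNReal.inv_le_iff_inv_le, ENNReal.mul_inv (.inl hb₀) (.inl hb), inv_inv,
    ENNReal.inv_mul_le_iff hb₀ hb]
  simpa using hνμ Set.univ

theorem normalize_le_mul_smul_normalize {μ ν : Measure α} {a b : ℝ≥0∞} (hb₀ : b ≠ 0)
    (hb : b ≠ ∞) (hμν : μ ≤ a • ν) (hνμ : ν ≤ b • μ) :
    (μ Set.univ)⁻¹ • μ ≤ (a * b) • ((ν Set.univ)⁻¹ • ν) := fun S => by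
  simp only [Measure.smul_apply, smul_eq_mul]
  calc (μ Set.univ)⁻¹ * μ S ≤ b * (ν Set.univ)⁻¹ * (a * ν S) :=
        mul_le_mul' (inv_measure_univ_le_mul hb₀ hb hνμ) (by simpa using hμν S)
    _ = a * b * ((ν Set.univ)⁻¹ * ν S) := by ring

end Normalize

namespace Extension

variable {X R : Type*} [MeasurableSpace R] (w : X → X → ℝ≥0∞) (B : Set X) (μ : X → Measure R)

noncomputable def density (x : X) (r : R) : ℝ≥0∞ :=
  ⨅ b : B, w x b * μ b {r}

noncomputable def measure (x : X) : Measure R :=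
  Measure.sum fun r => density w B μ x r • Measure.dirac r

variable {w B μ}

theorem density_le_mul (hw : ∀ x y z, w x z ≤ w x y * w y z) {x y : X} (hxy₀ : w x y ≠ 0)
    (hxy : w x y ≠ ∞) (r : R) : density w B μ x r ≤ w x y * density w B μ y r := by
  rw [density, density, ENNReal.mul_iInf_of_ne hxy₀ hxy]
  refine le_iInf fun b => (iInf_le _ b).trans ?_
  rw [← mul_assoc]
  exact mul_le_mul_left (hw x y b) _

theorem density_of_mem (hw_self : ∀ x, w x x = 1) (hμ : ∀ b ∈ B, ∀ b' ∈ B, μ b ≤ w b b' • μ b')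
    {b : X} (hb : b ∈ B) (r : R) : density w B μ b r = μ b {r} := by
  refine le_antisymm ((iInf_le _ ⟨b, hb⟩).trans_eq (by simp [hw_self])) (le_iInf fun b' => ?_)
  simpa using hμ b hb b' b'.2 {r}

variable [Countable R] [MeasurableSingletonClass R]

theorem measure_le_smul (hw : ∀ x y z, w x z ≤ w x y * w y z) {x y : X} (hxy₀ : w x y ≠ 0)
    (hxy : w x y ≠ ∞) : measure w B μ x ≤ w x y • measure w B μ y := fun S => by
  simp only [measure, Measure.smul_apply, smul_eq_mul,
    Measure.sum_apply _ S.to_countable.measurableSet, ← ENNReal.tsum_mul_left]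
  refine ENNReal.tsum_le_tsum fun r => ?_
  rw [← mul_assoc]
  exact mul_le_mul_left (density_le_mul hw hxy₀ hxy r) _

theorem measure_of_mem (hw_self : ∀ x, w x x = 1) (hμ : ∀ b ∈ B, ∀ b' ∈ B, μ b ≤ w b b' • μ b')
    {b : X} (hb : b ∈ B) : measure w B μ b = μ b := by
  simp only [measure, density_of_mem hw_self hμ hb]
  exact Measure.sum_smul_dirac (μ b)

end Extension

open Extension in
theorem exists_lipschitz_extension {X R : Type*} [MeasurableSpace R] [Countable R]
    [MeasurableSingletonClass R] {w : X → X → ℝ≥0∞} {B : Set X} {μ : X → Measure R}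
    (hw_self : ∀ x, w x x = 1) (hw : ∀ x y z, w x z ≤ w x y * w y z) (hw₀ : ∀ x y, w x y ≠ 0)
    (hw_top : ∀ x y, w x y ≠ ∞) (hB : B.Nonempty) (hprob : ∀ b ∈ B, IsProbabilityMeasure (μ b))
    (hμ : ∀ b ∈ B, ∀ b' ∈ B, μ b ≤ w b b' • μ b') :
    ∃ M : X → Measure R, (∀ x, IsProbabilityMeasure (M x)) ∧
      (∀ x y, M x ≤ (w x y * w y x) • M y) ∧ ∀ b ∈ B, M b = μ b := by
  obtain ⟨b₀, hb₀⟩ := hB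
  have hν_le x y := measure_le_smul (B := B) (μ := μ) hw (hw₀ x y) (hw_top x y)
  have hν_B : ∀ b ∈ B, measure w B μ b = μ b := fun b hb => measure_of_mem hw_self hμ hb
  have hfinite x : IsFiniteMeasure (measure w B μ x) := by
    have := hprob b₀ hb₀
    refine ⟨(hν_le x b₀ Set.univ).trans_lt ?_⟩
    simpa [hν_B b₀ hb₀] using lt_top_iff_ne_top.2 (hw_top x b₀)
  have hne x : NeZero (measure w B μ x) := by
    have := hprob b₀ hb₀
    refine ⟨fun h => IsProbabilityMeasure.ne_zero (μ b₀) (le_antisymm ?_ (Measure.zero_le _))⟩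
    simpa [hν_B b₀ hb₀, h] using hν_le b₀ x
  refine ⟨fun x => (measure w B μ x Set.univ)⁻¹ • measure w B μ x, fun x => inferInstance,
    fun x y => normalize_le_mul_smul_normalize (hw₀ y x) (hw_top y x) (hν_le x y) (hν_le y x),
    fun b hb => ?_⟩
  have := hprob b hb
  simp [hν_B b hb]

theorem ofReal_exp_mul_hammingDist_le {ι : Type*} {β : ι → Type*} [Fintype ι]
    [∀ i, DecidableEq (β i)] {ε : ℝ} (hε : 0 ≤ ε) (x y z : ∀ i, β i) :
    ENNReal.ofReal (Real.exp (ε * hammingDist x z)) ≤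
      ENNReal.ofReal (Real.exp (ε * hammingDist x y)) *
        ENNReal.ofReal (Real.exp (ε * hammingDist y z)) := by
  rw [← ENNReal.ofReal_mul (Real.exp_nonneg _), ← Real.exp_add, ← mul_add]
  gcongr
  exact_mod_cast hammingDist_triangle x y z

/-- Extension Lemma, Proposition 2.1, due to Borgs et al..
A partial mechanism `M_B` defined on `B ⊆ D^n` with countable output space satisfying
`Pr[M_B(d) ∈ S] ≤ e^{ε·|d-d'|_H}·Pr[M_B(d') ∈ S]` for all `d, d' ∈ B` extends to a
`2ε`-DP mechanism `M` on all of `D^n` agreeing with `M_B` on `B`. -/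
theorem stmt_7 {D R : Type*} [DecidableEq D] [MeasurableSpace R] [Countable R]
    [MeasurableSingletonClass R] [Nonempty R] {n : ℕ}
    (ε : ℝ) (hε : 0 ≤ ε) (B : Set (Fin n → D))
    (MB : (Fin n → D) → Measure R)
    (hprob : ∀ d ∈ B, IsProbabilityMeasure (MB d))
    (hDP : ∀ d ∈ B, ∀ d' ∈ B, ∀ S : Set R,
      MB d S ≤ ENNReal.ofReal (Real.exp (ε * hammingDist d d')) * MB d' S) :
    ∃ M : (Fin n → D) → Measure R,
      (∀ d, IsProbabilityMeasure (M d)) ∧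
      (∀ d d' : Fin n → D, hammingDist d d' = 1 →
        ∀ S : Set R, M d S ≤ ENNReal.ofReal (Real.exp (2 * ε)) * M d' S) ∧
      (∀ d ∈ B, M d = MB d) := by
  rcases B.eq_empty_or_nonempty with rfl | hB
  · obtain ⟨r₀⟩ := ‹Nonempty R›
    refine ⟨fun _ => Measure.dirac r₀, fun _ => inferInstance, fun d d' _ S => ?_, by simp⟩
    exact le_mul_of_one_le_left' (by simpa using Real.one_le_exp (by positivity : 0 ≤ 2 * ε))
  obtain ⟨M, hM_prob, hM_le, hM_B⟩ := exists_lipschitz_extension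
    (w := fun d d' => ENNReal.ofReal (Real.exp (ε * hammingDist d d'))) (by simp)
    (ofReal_exp_mul_hammingDist_le hε) (fun _ _ => by simp [Real.exp_pos])
    (fun _ _ => ENNReal.ofReal_ne_top) hB hprob
    (fun d hd d' hd' S => by simpa using hDP d hd d' hd' S)
  refine ⟨M, hM_prob, fun d d' hdd' S => ?_, hM_B⟩
  have h := hM_le d d' S
  rw [hammingDist_comm d' d, hdd', Measure.smul_apply, smul_eq_mul,
    ← ENNReal.ofReal_mul (Real.exp_nonneg _), ← Real.exp_add] at h
  convert h using 4
  push_cast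
  ring
end

section
/- (Advanced composition) Let M be an (ε,δ)-differentially private mechanism from D^n to probability distributions on an output space R, and let T be a positive integer. Then for every δ' ∈ (0,1), the mechanism that maps d to the joint distribution of T independent draws (Y_1, …, Y_T) from M(d) is (Tε² + ε·√(2T·ln(1/δ')), Tδ + δ')-differentially private. -/
/-!
Write `M d` and `M d'` as densities `p`, `q` against a common probability measure. An
`(ε, δ)`-indistinguishable pair decomposes as `p ≥ (1 - δ) p₀`, `q ≥ (1 - δ) q₀`, where `p₀`, `q₀`
are probability densities with `p₀ / q₀ ∈ [exp (-ε), exp ε]`; on `T`-fold products the discarded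
mass is `1 - (1 - δ) ^ T ≤ T δ`.

For the pure pair, Markov's inequality applied to `(∏ p₀ / q₀) ^ l` bounds the `p₀^{⊗T}`-mass of
the event where the privacy loss exceeds `a = T ε² + ε s`, `s = √(2 T log (1 / δ'))`, by
`exp (-l a) (∫ p₀ (p₀ / q₀) ^ l) ^ T`. Since `y = q₀ / p₀ ∈ [exp (-ε), exp ε]` and `∫ p₀ y = 1`,
the convexity of `y ↦ y ^ (-l)` gives `∫ p₀ (p₀ / q₀) ^ l ≤ cosh ((l + 1/2) ε) / cosh (ε / 2)`,
which is at most `exp ((l² + l) ε² / 2)` because `tanh t ≤ t`. With `l = s / (T ε)` the event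
has mass at most `δ'`, and off it `p₀^{⊗T} ≤ exp a · q₀^{⊗T}`.
-/

open MeasureTheory ProbabilityTheory Real Set
open scoped ENNReal

namespace Real

lemma sinh_le_mul_cosh {t : ℝ} (ht : 0 ≤ t) : sinh t ≤ t * cosh t := by
  have hmvt := (convex_Icc 0 t).image_sub_le_mul_sub_of_deriv_le continuous_sinh.continuousOn
    differentiable_sinh.differentiableOn (C := cosh t) (fun x hx => by
      rw [interior_Icc] at hx
      rw [Real.deriv_sinh, cosh_le_cosh, abs_of_pos hx.1, abs_of_nonneg ht]
      exact hx.2.le) 0 (left_mem_Icc.2 ht) t (right_mem_Icc.2 ht) ht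
  simpa [mul_comm] using hmvt

lemma cosh_le_cosh_mul_exp {u v : ℝ} (hv : 0 ≤ v) (hvu : v ≤ u) :
    cosh u ≤ cosh v * exp ((u ^ 2 - v ^ 2) / 2) := by
  have hanti : AntitoneOn (fun t => log (cosh t) - t ^ 2 / 2) (Ici 0) := by
    refine antitoneOn_of_hasDerivWithinAt_nonpos (convex_Ici 0)
      (f' := fun t => sinh t / cosh t - t)
      ((continuous_cosh.continuousOn.log fun x _ => (cosh_pos x).ne').sub (by fun_prop))
      (fun x _ => ?_) (fun x hx => ?_)
    · have hsq : HasDerivAt (fun t : ℝ => t ^ 2 / 2) x x := by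
        simpa using (hasDerivAt_pow 2 x).div_const 2
      exact (((hasDerivAt_cosh x).log (cosh_pos x).ne').sub hsq).hasDerivWithinAt
    · rw [interior_Ici] at hx
      rw [sub_nonpos, div_le_iff₀ (cosh_pos x)]
      exact sinh_le_mul_cosh hx.le
  have h := hanti (mem_Ici.2 hv) (mem_Ici.2 (hv.trans hvu)) hvu
  rw [← exp_le_exp, exp_sub, exp_sub, exp_log (cosh_pos _), exp_log (cosh_pos _),
    div_le_div_iff₀ (exp_pos _) (exp_pos _)] at h
  rw [sub_div, exp_sub, mul_div_assoc', le_div_iff₀ (exp_pos _)]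
  exact h

lemma convexOn_rpow_neg {l : ℝ} (hl : 0 ≤ l) : ConvexOn ℝ (Ioi 0) fun y : ℝ => y ^ (-l) := by
  refine convexOn_of_hasDerivWithinAt2_nonneg (convex_Ioi 0)
    (f' := fun y => -l * y ^ (-l - 1)) (f'' := fun y => -l * ((-l - 1) * y ^ (-l - 1 - 1)))
    (continuousOn_id.rpow_const fun x hx => Or.inl (ne_of_gt hx)) (fun x hx => ?_)
    (fun x hx => ?_) (fun x hx => ?_) <;> rw [interior_Ioi] at hx
  · exact (hasDerivAt_rpow_const (Or.inl (ne_of_gt hx))).hasDerivWithinAt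
  · exact ((hasDerivAt_rpow_const (Or.inl (ne_of_gt hx))).const_mul (-l)).hasDerivWithinAt
  · have := rpow_nonneg hx.le (-l - 1 - 1)
    have : 0 ≤ l * (l + 1) * x ^ (-l - 1 - 1) := by positivity
    linarith [show -l * ((-l - 1) * x ^ (-l - 1 - 1)) = l * (l + 1) * x ^ (-l - 1 - 1) by ring]

/-- The chord of `y ↦ y ^ (-l)` over `[exp (-ε), exp ε]`, written with `sinh`. -/
lemma rpow_neg_mul_sinh_add_le {ε l y : ℝ} (hε : 0 < ε) (hl : 0 ≤ l)
    (hy₁ : exp (-ε) ≤ y) (hy₂ : y ≤ exp ε) :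
    y ^ (-l) * sinh ε + sinh (l * ε) * y ≤ sinh ((l + 1) * ε) := by
  have hd : 0 < exp ε - exp (-ε) := sub_pos.2 (exp_lt_exp.2 (by linarith))
  have hconv := (convexOn_rpow_neg hl).2 (mem_Ioi.2 (exp_pos (-ε))) (mem_Ioi.2 (exp_pos ε))
    (div_nonneg (sub_nonneg.2 hy₂) hd.le) (div_nonneg (sub_nonneg.2 hy₁) hd.le)
    (by field_simp; ring)
  have hcomb : ((exp ε - y) / (exp ε - exp (-ε))) • exp (-ε)
      + ((y - exp (-ε)) / (exp ε - exp (-ε))) • exp ε = y := by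
    simp only [smul_eq_mul]; field_simp; ring
  rw [hcomb] at hconv
  simp only [smul_eq_mul, ← exp_mul, neg_mul, mul_neg, neg_neg] at hconv
  rw [div_mul_eq_mul_div, div_mul_eq_mul_div, ← add_div, le_div_iff₀ hd] at hconv
  have e₁ : exp ((l + 1) * ε) = exp ε * exp (ε * l) := by rw [← exp_add]; ring_nf
  have e₂ : exp (-((l + 1) * ε)) = exp (-ε) * exp (-(ε * l)) := by rw [← exp_add]; ring_nf
  rw [sinh_eq, sinh_eq, sinh_eq, e₁, e₂, mul_comm l ε]
  nlinarith [hconv]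

lemma sinh_add_one_mul_sub_sinh_le {ε l : ℝ} (hε : 0 ≤ ε) (hl : 0 ≤ l) :
    sinh ((l + 1) * ε) - sinh (l * ε) ≤ exp ((l ^ 2 + l) * ε ^ 2 / 2) * sinh ε := by
  have hsub : sinh ((l + 1) * ε) - sinh (l * ε) = 2 * cosh ((l + 1 / 2) * ε) * sinh (ε / 2) := by
    have h₁ := sinh_add ((l + 1 / 2) * ε) (ε / 2)
    have h₂ := sinh_sub ((l + 1 / 2) * ε) (ε / 2)
    rw [show (l + 1 / 2) * ε + ε / 2 = (l + 1) * ε by ring] at h₁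
    rw [show (l + 1 / 2) * ε - ε / 2 = l * ε by ring] at h₂
    rw [h₁, h₂]; ring
  have hsinh : sinh ε = 2 * sinh (ε / 2) * cosh (ε / 2) := by
    rw [← sinh_two_mul]; ring_nf
  have hcosh := cosh_le_cosh_mul_exp (by linarith : 0 ≤ ε / 2)
    (by nlinarith : ε / 2 ≤ (l + 1 / 2) * ε)
  rw [show (((l + 1 / 2) * ε) ^ 2 - (ε / 2) ^ 2) / 2 = (l ^ 2 + l) * ε ^ 2 / 2 by ring] at hcosh
  have hs : 0 ≤ sinh (ε / 2) := sinh_nonneg_iff.2 (by linarith)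
  rw [hsub, hsinh]
  nlinarith [mul_le_mul_of_nonneg_left hcosh (by linarith : 0 ≤ 2 * sinh (ε / 2))]

end Real

namespace ENNReal

lemma mul_div_rpow_mul_sinh_add_le {ε l : ℝ} (hε : 0 < ε) (hl : 0 ≤ l) {x y : ℝ≥0∞}
    (hx : x ≠ ∞) (hy : y ≠ ∞) (hxy : x ≤ ENNReal.ofReal (exp ε) * y)
    (hyx : y ≤ ENNReal.ofReal (exp ε) * x) :
    x * (x / y) ^ l * ENNReal.ofReal (sinh ε) + ENNReal.ofReal (sinh (l * ε)) * y
      ≤ ENNReal.ofReal (sinh ((l + 1) * ε)) * x := by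
  rcases eq_or_ne x 0 with rfl | hx₀
  · simp [show y = 0 by simpa using hyx]
  have hy₀ : y ≠ 0 := by rintro rfl; exact hx₀ (by simpa using hxy)
  obtain ⟨a, ha, rfl⟩ : ∃ a, 0 < a ∧ ENNReal.ofReal a = x :=
    ⟨x.toReal, ENNReal.toReal_pos hx₀ hx, ENNReal.ofReal_toReal hx⟩
  obtain ⟨b, hb, rfl⟩ : ∃ b, 0 < b ∧ ENNReal.ofReal b = y :=
    ⟨y.toReal, ENNReal.toReal_pos hy₀ hy, ENNReal.ofReal_toReal hy⟩
  rw [← ENNReal.ofReal_mul (exp_pos _).le, ENNReal.ofReal_le_ofReal_iff (by positivity)] at hxy hyx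
  have hchord := rpow_neg_mul_sinh_add_le hε hl (y := b / a)
    (by rw [exp_neg, inv_le_iff_one_le_mul₀ (exp_pos ε), div_mul_eq_mul_div, le_div_iff₀ ha]
        linarith)
    (by rw [div_le_iff₀ ha]; linarith)
  rw [Real.rpow_neg (div_nonneg hb.le ha.le), ← Real.inv_rpow (div_nonneg hb.le ha.le),
    inv_div] at hchord
  have hsinh : 0 ≤ sinh (l * ε) := sinh_nonneg_iff.2 (by positivity)
  rw [← ENNReal.ofReal_div_of_pos hb, ENNReal.ofReal_rpow_of_pos (div_pos ha hb),
    ← ENNReal.ofReal_mul ha.le, ← ENNReal.ofReal_mul (by positivity), ← ENNReal.ofReal_mul hsinh,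
    ← ENNReal.ofReal_add (by positivity) (by positivity),
    ← ENNReal.ofReal_mul (sinh_nonneg_iff.2 (by positivity))]
  refine ENNReal.ofReal_le_ofReal ?_
  have := mul_le_mul_of_nonneg_left hchord ha.le
  rw [mul_add, ← mul_assoc, mul_left_comm a (sinh (l * ε)), mul_div_cancel₀ b ha.ne'] at this
  linarith

lemma one_sub_one_sub_pow_le (x : ℝ≥0∞) (n : ℕ) : 1 - (1 - x) ^ n ≤ n * x := by
  induction n with
  | zero => simp
  | succ n ih =>
    have hy : (1 - x) ^ n ≤ 1 := pow_le_one' tsub_le_self n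
    have hstep : (1 - x) ^ n ≤ x + (1 - x) ^ n * (1 - x) :=
      calc (1 - x) ^ n ≤ (1 - x) ^ n * ((1 - x) + x) := le_mul_of_one_le_right' le_tsub_add
        _ = (1 - x) ^ n * (1 - x) + (1 - x) ^ n * x := mul_add _ _ _
        _ ≤ (1 - x) ^ n * (1 - x) + x := add_le_add le_rfl (mul_le_of_le_one_left' hy)
        _ = x + (1 - x) ^ n * (1 - x) := add_comm _ _
    calc 1 - (1 - x) ^ (n + 1)
        ≤ (1 - (1 - x) ^ n) + ((1 - x) ^ n - (1 - x) ^ n * (1 - x)) := by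
          rw [pow_succ]; exact tsub_le_tsub_add_tsub
      _ ≤ n * x + x := add_le_add ih (tsub_le_iff_right.2 hstep)
      _ = (n + 1 : ℕ) * x := by push_cast; ring

lemma pow_card_mul_prod_le {ι α : Type*} [Fintype ι] {c : ℝ≥0∞} {f g : α → ℝ≥0∞}
    (hfg : ∀ a, c * f a ≤ g a) (x : ι → α) :
    c ^ Fintype.card ι * ∏ i, f (x i) ≤ ∏ i, g (x i) := by
  rw [← Finset.card_univ, ← Finset.prod_const, ← Finset.prod_mul_distrib]
  exact Finset.prod_le_prod' fun i _ => hfg _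

end ENNReal

namespace MeasureTheory

section Pi

variable {ι : Type*} [Fintype ι] {α : ι → Type*} [∀ i, MeasurableSpace (α i)]

lemma lintegral_pi_prod_eq_prod (μ : ∀ i, Measure (α i)) [∀ i, IsProbabilityMeasure (μ i)]
    {f : ∀ i, α i → ℝ≥0∞} (hf : ∀ i, Measurable (f i)) :
    ∫⁻ x, ∏ i, f i (x i) ∂Measure.pi μ = ∏ i, ∫⁻ a, f i a ∂μ i := by
  rw [lintegral_prod_eq_prod_lintegral_of_indepFun _ _
    (iIndepFun_pi fun i => (hf i).aemeasurable) fun i => (hf i).comp (measurable_pi_apply i)]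
  exact Finset.prod_congr rfl fun i _ => (measurePreserving_eval μ i).lintegral_comp (hf i)

lemma Measure.pi_withDensity (μ : ∀ i, Measure (α i)) [∀ i, IsProbabilityMeasure (μ i)]
    {f : ∀ i, α i → ℝ≥0∞} (hf : ∀ i, Measurable (f i)) (hf_fin : ∀ i, ∫⁻ a, f i a ∂μ i ≠ ∞) :
    Measure.pi (fun i => (μ i).withDensity (f i))
      = (Measure.pi μ).withDensity fun x => ∏ i, f i (x i) := by
  have : ∀ i, IsFiniteMeasure ((μ i).withDensity (f i)) :=
    fun i => isFiniteMeasure_withDensity (hf_fin i)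
  refine Measure.pi_eq fun s hs => ?_
  have hind : (univ.pi s).indicator (fun x => ∏ i, f i (x i))
      = fun x => ∏ i, (s i).indicator (f i) (x i) := by
    ext x
    by_cases hx : x ∈ univ.pi s
    · rw [indicator_of_mem hx]
      exact Finset.prod_congr rfl fun i _ => (indicator_of_mem (hx i trivial) _).symm
    · obtain ⟨i, hi⟩ : ∃ i, x i ∉ s i := by simpa using hx
      rw [indicator_of_notMem hx]
      exact (Finset.prod_eq_zero (Finset.mem_univ i) (indicator_of_notMem hi _)).symm
  rw [withDensity_apply _ (MeasurableSet.univ_pi hs), ← lintegral_indicator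
    (MeasurableSet.univ_pi hs), hind, lintegral_pi_prod_eq_prod μ fun i => (hf i).indicator (hs i)]
  exact Finset.prod_congr rfl fun i _ => (lintegral_indicator (hs i) _).trans
    (withDensity_apply _ (hs i)).symm

end Pi

variable {α : Type*} [MeasurableSpace α] {μ : Measure α} {f g : α → ℝ≥0∞}

lemma lintegral_pi_prod_eq_pow {ι : Type*} [Fintype ι] (μ : Measure α) [IsProbabilityMeasure μ]
    (hf : Measurable f) :
    ∫⁻ x, ∏ i, f (x i) ∂Measure.pi (fun _ : ι => μ) = (∫⁻ a, f a ∂μ) ^ Fintype.card ι := by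
  rw [lintegral_pi_prod_eq_prod _ fun _ => hf, Finset.prod_const, Finset.card_univ]

lemma setLIntegral_le_mul_setLIntegral_add (hg : Measurable g) (A : ℝ≥0∞) (S : Set α) :
    ∫⁻ x in S, f x ∂μ ≤ A * ∫⁻ x in S, g x ∂μ + ∫⁻ x in {x | A * g x < f x}, f x ∂μ := by
  calc ∫⁻ x in S, f x ∂μ ≤ ∫⁻ x in S, A * g x + {x | A * g x < f x}.indicator f x ∂μ := by
        refine lintegral_mono fun x => ?_
        by_cases hx : A * g x < f x
        · rw [indicator_of_mem (show x ∈ {x | A * g x < f x} from hx)]; exact le_add_self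
        · rw [indicator_of_notMem (show x ∉ {x | A * g x < f x} from hx), add_zero]
          exact not_lt.1 hx
    _ = A * ∫⁻ x in S, g x ∂μ + ∫⁻ x in S, {x | A * g x < f x}.indicator f x ∂μ := by
        rw [lintegral_add_left (hg.const_mul A), lintegral_const_mul _ hg]
    _ ≤ _ := add_le_add le_rfl
        ((setLIntegral_le_lintegral _ _).trans (lintegral_indicator_le _ _))

/-- Markov's inequality for the likelihood ratio `r = f / g`. -/
lemma rpow_mul_setLIntegral_lt_le (hf : Measurable f) (hg : Measurable g) {r : α → ℝ≥0∞}
    (hfrg : ∀ x, f x = r x * g x) (A : ℝ≥0∞) {l : ℝ} (hl : 0 ≤ l) :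
    A ^ l * ∫⁻ x in {x | A * g x < f x}, f x ∂μ ≤ ∫⁻ x, r x ^ l * f x ∂μ := by
  have hE : MeasurableSet {x | A * g x < f x} := measurableSet_lt (hg.const_mul A) hf
  calc A ^ l * ∫⁻ x in {x | A * g x < f x}, f x ∂μ
      = ∫⁻ x in {x | A * g x < f x}, A ^ l * f x ∂μ := (lintegral_const_mul _ hf).symm
    _ ≤ ∫⁻ x in {x | A * g x < f x}, r x ^ l * f x ∂μ := by
        refine setLIntegral_mono' hE fun x hx => mul_le_mul_left ?_ _
        change A * g x < f x at hx
        rw [hfrg] at hx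
        exact ENNReal.rpow_le_rpow (lt_of_mul_lt_mul_right' hx).le hl
    _ ≤ _ := setLIntegral_le_lintegral _ _

lemma setLIntegral_le_mul_setLIntegral_add_sub (hg : Measurable g) {c : ℝ≥0∞} (hc : c ≠ ∞)
    (hg_fin : ∫⁻ x, g x ∂μ ≠ ∞) (hcgf : ∀ x, c * g x ≤ f x) (S : Set α) :
    ∫⁻ x in S, f x ∂μ ≤ c * ∫⁻ x in S, g x ∂μ + (∫⁻ x, f x ∂μ - c * ∫⁻ x, g x ∂μ) := by
  calc ∫⁻ x in S, f x ∂μ = ∫⁻ x in S, c * g x + (f x - c * g x) ∂μ :=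
        lintegral_congr fun x => (add_tsub_cancel_of_le (hcgf x)).symm
    _ = c * ∫⁻ x in S, g x ∂μ + ∫⁻ x in S, f x - c * g x ∂μ := by
        rw [lintegral_add_left (hg.const_mul c), lintegral_const_mul _ hg]
    _ ≤ c * ∫⁻ x in S, g x ∂μ + ∫⁻ x, f x - c * g x ∂μ :=
        add_le_add le_rfl (setLIntegral_le_lintegral _ _)
    _ = _ := by
        rw [lintegral_sub (hg.const_mul c) (by rw [lintegral_const_mul _ hg]; finiteness)
          (ae_of_all _ hcgf), lintegral_const_mul _ hg]

lemma lintegral_le_lintegral_min_add (hf : Measurable f) (hg : Measurable g) {K δ : ℝ≥0∞}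
    (hfg : ∀ s, MeasurableSet s → ∫⁻ a in s, f a ∂μ ≤ K * ∫⁻ a in s, g a ∂μ + δ) :
    ∫⁻ a, f a ∂μ ≤ ∫⁻ a, min (f a) (K * g a) ∂μ + δ := by
  set B := {a | K * g a < f a}
  have hB : MeasurableSet B := measurableSet_lt (hg.const_mul K) hf
  have hmin : ∫⁻ a, min (f a) (K * g a) ∂μ = K * ∫⁻ a in B, g a ∂μ + ∫⁻ a in Bᶜ, f a ∂μ := by
    rw [← lintegral_add_compl _ hB, setLIntegral_congr_fun hB fun a ha => min_eq_right ha.le,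
      setLIntegral_congr_fun hB.compl fun a ha => min_eq_left (not_lt.1 ha),
      lintegral_const_mul _ hg]
  calc ∫⁻ a, f a ∂μ = ∫⁻ a in B, f a ∂μ + ∫⁻ a in Bᶜ, f a ∂μ := (lintegral_add_compl f hB).symm
    _ ≤ K * ∫⁻ a in B, g a ∂μ + δ + ∫⁻ a in Bᶜ, f a ∂μ := add_le_add (hfg B hB) le_rfl
    _ = _ := by rw [hmin]; ring

lemma exists_between_lintegral_eq {ℓ u : α → ℝ≥0∞} (hℓ : Measurable ℓ) (hu : Measurable u)
    (hℓu : ∀ a, ℓ a ≤ u a) {c : ℝ≥0∞} (hℓc : ∫⁻ a, ℓ a ∂μ ≤ c) (hcu : c ≤ ∫⁻ a, u a ∂μ)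
    (hu_fin : ∫⁻ a, u a ∂μ ≠ ∞) :
    ∃ h : α → ℝ≥0∞, Measurable h ∧ (∀ a, ℓ a ≤ h a) ∧ (∀ a, h a ≤ u a) ∧ ∫⁻ a, h a ∂μ = c := by
  set θ := (c - ∫⁻ a, ℓ a ∂μ) / (∫⁻ a, u a ∂μ - ∫⁻ a, ℓ a ∂μ)
  have hθ : θ ≤ 1 := ENNReal.div_le_of_le_mul (by rw [one_mul]; exact tsub_le_tsub_right hcu _)
  refine ⟨fun a => ℓ a + θ * (u a - ℓ a), hℓ.add ((hu.sub hℓ).const_mul θ), fun a => le_self_add,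
    fun a => ?_, ?_⟩
  · calc ℓ a + θ * (u a - ℓ a) ≤ ℓ a + (u a - ℓ a) :=
          add_le_add le_rfl (mul_le_of_le_one_left' hθ)
      _ = u a := add_tsub_cancel_of_le (hℓu a)
  · have hℓ_fin : ∫⁻ a, ℓ a ∂μ ≠ ∞ := ne_top_of_le_ne_top hu_fin (hℓc.trans hcu)
    rw [lintegral_add_left hℓ, lintegral_const_mul θ (f := fun a => u a - ℓ a) (hu.sub hℓ),
      lintegral_sub hℓ hℓ_fin (ae_of_all _ hℓu)]
    rcases eq_or_ne (∫⁻ a, u a ∂μ - ∫⁻ a, ℓ a ∂μ) 0 with h0 | h0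
    · have : c = ∫⁻ a, ℓ a ∂μ := le_antisymm (hcu.trans (tsub_eq_zero_iff_le.1 h0)) hℓc
      simp [h0, this]
    · rw [ENNReal.div_mul_cancel h0 (ne_top_of_le_ne_top hu_fin tsub_le_self),
        add_tsub_cancel_of_le hℓc]

lemma Measure.AbsolutelyContinuous.exists_withDensity_eq {ν : Measure α} [SigmaFinite μ]
    [SigmaFinite ν] (h : μ ≪ ν) :
    ∃ f : α → ℝ≥0∞, Measurable f ∧ (∀ a, f a ≠ ∞) ∧ ν.withDensity f = μ := by
  refine ⟨fun a => (μ.rnDeriv ν a).toNNReal,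
    (Measure.measurable_rnDeriv μ ν).ennreal_toNNReal.coe_nnreal_ennreal,
    fun a => ENNReal.coe_ne_top, ?_⟩
  rw [withDensity_congr_ae ?_, Measure.withDensity_rnDeriv_eq μ ν h]
  filter_upwards [Measure.rnDeriv_lt_top μ ν] with a ha using ENNReal.coe_toNNReal ha.ne

lemma exists_isProbabilityMeasure_withDensity_eq (P Q : Measure α) [IsProbabilityMeasure P]
    [IsProbabilityMeasure Q] :
    ∃ ν : Measure α, IsProbabilityMeasure ν ∧ ∃ p q : α → ℝ≥0∞, Measurable p ∧ Measurable q ∧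
      (∀ a, p a ≠ ∞) ∧ (∀ a, q a ≠ ∞) ∧ ν.withDensity p = P ∧ ν.withDensity q = Q := by
  set ν := (2⁻¹ : ℝ≥0∞) • (P + Q)
  have hν : IsProbabilityMeasure ν :=
    ⟨by simp [ν, ← two_mul, ENNReal.mul_inv_cancel two_ne_zero ENNReal.ofNat_ne_top]⟩
  have hPQν : P + Q ≪ ν := Measure.absolutelyContinuous_smul (by simp)
  have hPν : P ≪ ν := (Measure.absolutelyContinuous_of_le (Measure.le_add_right le_rfl)).trans hPQν
  have hQν : Q ≪ ν := (Measure.absolutelyContinuous_of_le (Measure.le_add_left le_rfl)).trans hPQν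
  obtain ⟨p, hp, hp_fin, hpP⟩ := hPν.exists_withDensity_eq
  obtain ⟨q, hq, hq_fin, hqQ⟩ := hQν.exists_withDensity_eq
  exact ⟨ν, hν, p, q, hp, hq, hp_fin, hq_fin, hpP, hqQ⟩

end MeasureTheory

noncomputable def advancedCompositionEps (T : ℕ) (ε δ' : ℝ) : ℝ :=
  T * ε ^ 2 + ε * √(2 * T * log (1 / δ'))

/-- The Chernoff parameter `l = s / (T ε)`, `s = √(2 T log (1 / δ'))`, makes the exponent
`T (l² + l) ε² / 2 - l · advancedCompositionEps T ε δ'` equal to `log δ' - ε s / 2`. -/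
lemma mul_le_advancedCompositionEps_mul_add_log {T : ℕ} (hT : 0 < T) {ε δ' l : ℝ} (hε : 0 < ε)
    (hδ'₀ : 0 < δ') (hδ'₁ : δ' ≤ 1) (hl : l = √(2 * T * log (1 / δ')) / (T * ε)) :
    T * ((l ^ 2 + l) * ε ^ 2 / 2) ≤ advancedCompositionEps T ε δ' * l + log δ' := by
  set s := √(2 * T * log (1 / δ'))
  have hT' : (0 : ℝ) < T := Nat.cast_pos.2 hT
  have hs : s ^ 2 / T = -2 * log δ' := by
    rw [sq_sqrt (mul_nonneg (by positivity) (log_nonneg (one_le_one_div hδ'₀ hδ'₁))),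
      one_div, log_inv]
    field_simp
  have e₁ : T * ((l ^ 2 + l) * ε ^ 2 / 2) = s ^ 2 / T / 2 + ε * s / 2 := by
    rw [hl]; field_simp
  have e₂ : advancedCompositionEps T ε δ' * l = s ^ 2 / T + ε * s := by
    rw [show advancedCompositionEps T ε δ' = T * ε ^ 2 + ε * s from rfl, hl]; field_simp; ring
  nlinarith [mul_nonneg hε.le (sqrt_nonneg (2 * T * log (1 / δ')))]

section DifferentialPrivacy

variable {α : Type*} [MeasurableSpace α] {ν : Measure α} {ε : ℝ}

structure IsPureDPPair (ν : Measure α) (ε : ℝ) (p q : α → ℝ≥0∞) : Prop where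
  measurable_left : Measurable p
  measurable_right : Measurable q
  ne_top_left : ∀ a, p a ≠ ∞
  ne_top_right : ∀ a, q a ≠ ∞
  lintegral_left : ∫⁻ a, p a ∂ν = 1
  lintegral_right : ∫⁻ a, q a ∂ν = 1
  le_left : ∀ a, p a ≤ ENNReal.ofReal (exp ε) * q a
  le_right : ∀ a, q a ≤ ENNReal.ofReal (exp ε) * p a

namespace IsPureDPPair

variable {p q : α → ℝ≥0∞}

lemma symm (h : IsPureDPPair ν ε p q) : IsPureDPPair ν ε q p :=
  ⟨h.2, h.1, h.4, h.3, h.6, h.5, h.8, h.7⟩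

lemma eq_div_mul (h : IsPureDPPair ν ε p q) (a : α) : p a = p a / q a * q a := by
  rcases eq_or_ne (q a) 0 with hq | hq
  · have : p a = 0 := le_zero_iff.1 (by simpa [hq] using h.le_left a)
    simp [this, hq]
  · exact (ENNReal.div_mul_cancel hq (h.ne_top_right a)).symm

lemma lintegral_mul_div_rpow_le (h : IsPureDPPair ν ε p q) (hε : 0 < ε) {l : ℝ} (hl : 0 ≤ l) :
    ∫⁻ a, p a * (p a / q a) ^ l ∂ν ≤ ENNReal.ofReal (exp ((l ^ 2 + l) * ε ^ 2 / 2)) := by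
  have hg : Measurable fun a => p a * (p a / q a) ^ l :=
    h.measurable_left.mul ((h.measurable_left.div h.measurable_right).pow_const l)
  have hsinh : 0 < sinh ε := sinh_pos_iff.2 hε
  have hint : (∫⁻ a, p a * (p a / q a) ^ l ∂ν) * ENNReal.ofReal (sinh ε)
      + ENNReal.ofReal (sinh (l * ε)) ≤ ENNReal.ofReal (sinh ((l + 1) * ε)) :=
    calc _ = ∫⁻ a, p a * (p a / q a) ^ l * ENNReal.ofReal (sinh ε)
          + ENNReal.ofReal (sinh (l * ε)) * q a ∂ν := by
          rw [lintegral_add_left (hg.mul_const _), lintegral_mul_const _ hg,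
            lintegral_const_mul _ h.measurable_right, h.lintegral_right, mul_one]
      _ ≤ ∫⁻ a, ENNReal.ofReal (sinh ((l + 1) * ε)) * p a ∂ν :=
          lintegral_mono fun a => ENNReal.mul_div_rpow_mul_sinh_add_le hε hl (h.ne_top_left a)
            (h.ne_top_right a) (h.le_left a) (h.le_right a)
      _ = _ := by rw [lintegral_const_mul _ h.measurable_left, h.lintegral_left, mul_one]
  rw [← ENNReal.mul_le_mul_iff_left (ENNReal.ofReal_pos.2 hsinh).ne' ENNReal.ofReal_ne_top,
    ← ENNReal.ofReal_mul (exp_pos _).le]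
  calc _ ≤ ENNReal.ofReal (sinh ((l + 1) * ε)) - ENNReal.ofReal (sinh (l * ε)) :=
        ENNReal.le_sub_of_add_le_right ENNReal.ofReal_ne_top hint
    _ = ENNReal.ofReal (sinh ((l + 1) * ε) - sinh (l * ε)) :=
        (ENNReal.ofReal_sub _ (sinh_nonneg_iff.2 (by positivity))).symm
    _ ≤ _ := ENNReal.ofReal_le_ofReal (sinh_add_one_mul_sub_sinh_le hε.le hl)

lemma lintegral_pi_prod_div_rpow_mul_le [IsProbabilityMeasure ν] (h : IsPureDPPair ν ε p q)
    (hε : 0 < ε) {l : ℝ} (hl : 0 ≤ l) (T : ℕ) :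
    ∫⁻ x, (∏ i, p (x i) / q (x i)) ^ l * ∏ i, p (x i) ∂Measure.pi (fun _ : Fin T => ν)
      ≤ ENNReal.ofReal (exp (T * ((l ^ 2 + l) * ε ^ 2 / 2))) := by
  have hg : Measurable fun a => p a * (p a / q a) ^ l :=
    h.measurable_left.mul ((h.measurable_left.div h.measurable_right).pow_const l)
  simp_rw [← ENNReal.prod_rpow_of_nonneg hl, ← Finset.prod_mul_distrib, mul_comm _ (p _)]
  rw [lintegral_pi_prod_eq_pow ν hg, Fintype.card_fin, exp_nat_mul,
    ENNReal.ofReal_pow (exp_pos _).le]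
  exact pow_le_pow_left' (h.lintegral_mul_div_rpow_le hε hl) T

lemma setLIntegral_pi_lt_le [IsProbabilityMeasure ν] (h : IsPureDPPair ν ε p q) (hε : 0 < ε)
    {T : ℕ} (hT : 0 < T) {δ' : ℝ} (hδ'₀ : 0 < δ') (hδ'₁ : δ' ≤ 1) :
    ∫⁻ x in {x : Fin T → α |
        ENNReal.ofReal (exp (advancedCompositionEps T ε δ')) * ∏ i, q (x i) < ∏ i, p (x i)},
      ∏ i, p (x i) ∂Measure.pi (fun _ => ν) ≤ ENNReal.ofReal δ' := by
  set a := advancedCompositionEps T ε δ'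
  set l := √(2 * T * log (1 / δ')) / (T * ε) with hl_def
  have hl : 0 ≤ l := by positivity
  have hmarkov := rpow_mul_setLIntegral_lt_le (μ := Measure.pi fun _ : Fin T => ν)
    (Finset.measurable_prod _ fun i _ => h.measurable_left.comp (measurable_pi_apply i))
    (Finset.measurable_prod _ fun i _ => h.measurable_right.comp (measurable_pi_apply i))
    (r := fun x => ∏ i, p (x i) / q (x i))
    (fun x => by
      rw [← Finset.prod_mul_distrib]; exact Finset.prod_congr rfl fun i _ => h.eq_div_mul _)
    (ENNReal.ofReal (exp a)) hl
  rw [ENNReal.ofReal_rpow_of_pos (exp_pos a), ← exp_mul] at hmarkov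
  rw [← ENNReal.mul_le_mul_iff_right (ENNReal.ofReal_pos.2 (exp_pos (a * l))).ne'
    ENNReal.ofReal_ne_top, ← ENNReal.ofReal_mul (exp_pos _).le]
  refine (hmarkov.trans (h.lintegral_pi_prod_div_rpow_mul_le hε hl T)).trans
    (ENNReal.ofReal_le_ofReal ((exp_le_exp.2
      (mul_le_advancedCompositionEps_mul_add_log hT hε hδ'₀ hδ'₁ hl_def)).trans_eq ?_))
  rw [exp_add, exp_log hδ'₀]

theorem setLIntegral_pi_le [IsProbabilityMeasure ν] (h : IsPureDPPair ν ε p q) (hε : 0 ≤ ε)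
    {T : ℕ} (hT : 0 < T) {δ' : ℝ} (hδ'₀ : 0 < δ') (hδ'₁ : δ' ≤ 1) (S : Set (Fin T → α)) :
    ∫⁻ x in S, ∏ i, p (x i) ∂Measure.pi (fun _ => ν) ≤
      ENNReal.ofReal (exp (advancedCompositionEps T ε δ')) *
        ∫⁻ x in S, ∏ i, q (x i) ∂Measure.pi (fun _ => ν) + ENNReal.ofReal δ' := by
  refine (setLIntegral_le_mul_setLIntegral_add
    (Finset.measurable_prod _ fun i _ => h.measurable_right.comp (measurable_pi_apply i)) _ S).trans
    (add_le_add le_rfl ?_)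
  rcases hε.eq_or_lt with rfl | hε
  · have hle (x : Fin T → α) : ∏ i, p (x i) ≤ ∏ i, q (x i) :=
      Finset.prod_le_prod' fun i _ => by simpa using h.le_left (x i)
    have hempty : {x : Fin T → α | ENNReal.ofReal (exp (advancedCompositionEps T 0 δ')) *
        ∏ i, q (x i) < ∏ i, p (x i)} = ∅ := by
      simp only [advancedCompositionEps, zero_pow two_ne_zero, mul_zero, zero_mul, add_zero,
        exp_zero, ENNReal.ofReal_one, one_mul]
      exact eq_empty_of_forall_notMem fun x => not_lt.2 (hle x)
    simp [hempty]
  · exact h.setLIntegral_pi_lt_le hε hT hδ'₀ hδ'₁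

end IsPureDPPair

lemma IsPureDPPair.setLIntegral_pi_le_of_mul_le [IsProbabilityMeasure ν] {p₀ q₀ : α → ℝ≥0∞}
    (h : IsPureDPPair ν ε p₀ q₀) (hε : 0 ≤ ε) {T : ℕ} (hT : 0 < T) {δ' : ℝ} (hδ'₀ : 0 < δ')
    (hδ'₁ : δ' ≤ 1) {p q : α → ℝ≥0∞} (hp : Measurable p) (hp₁ : ∫⁻ a, p a ∂ν = 1) {c : ℝ≥0∞}
    (hc : c ≤ 1) (hp₀ : ∀ a, c * p₀ a ≤ p a) (hq₀ : ∀ a, c * q₀ a ≤ q a) (S : Set (Fin T → α)) :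
    ∫⁻ x in S, ∏ i, p (x i) ∂Measure.pi (fun _ => ν) ≤
      ENNReal.ofReal (exp (advancedCompositionEps T ε δ')) *
        ∫⁻ x in S, ∏ i, q (x i) ∂Measure.pi (fun _ => ν) + ((1 - c ^ T) + ENNReal.ofReal δ') := by
  have hmeas {f : α → ℝ≥0∞} (hf : Measurable f) : Measurable fun x : Fin T → α => ∏ i, f (x i) :=
    Finset.measurable_prod _ fun i _ => hf.comp (measurable_pi_apply i)
  have hprod {f g : α → ℝ≥0∞} (hfg : ∀ a, c * f a ≤ g a) (x : Fin T → α) :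
      c ^ T * ∏ i, f (x i) ≤ ∏ i, g (x i) := by
    simpa using ENNReal.pow_card_mul_prod_le hfg x
  have hint {f : α → ℝ≥0∞} (hf : Measurable f) (hf₁ : ∫⁻ a, f a ∂ν = 1) :
      ∫⁻ x, ∏ i, f (x i) ∂Measure.pi (fun _ : Fin T => ν) = 1 := by
    rw [lintegral_pi_prod_eq_pow ν hf, hf₁, one_pow]
  have hcT : c ^ T ≤ 1 := pow_le_one' hc T
  have hmix := setLIntegral_le_mul_setLIntegral_add_sub (hmeas h.measurable_left)
    (ne_top_of_le_ne_top ENNReal.one_ne_top hcT)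
    (by rw [hint h.measurable_left h.lintegral_left]; exact ENNReal.one_ne_top) (hprod hp₀) S
  rw [hint hp hp₁, hint h.measurable_left h.lintegral_left, mul_one] at hmix
  calc ∫⁻ x in S, ∏ i, p (x i) ∂Measure.pi (fun _ => ν)
      ≤ c ^ T * (ENNReal.ofReal (exp (advancedCompositionEps T ε δ')) *
          ∫⁻ x in S, ∏ i, q₀ (x i) ∂Measure.pi (fun _ => ν) + ENNReal.ofReal δ') + (1 - c ^ T) :=
        hmix.trans (add_le_add (mul_le_mul_right (h.setLIntegral_pi_le hε hT hδ'₀ hδ'₁ S) _) le_rfl)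
    _ = ENNReal.ofReal (exp (advancedCompositionEps T ε δ')) *
          ∫⁻ x in S, c ^ T * ∏ i, q₀ (x i) ∂Measure.pi (fun _ => ν)
          + ((1 - c ^ T) + c ^ T * ENNReal.ofReal δ') := by
        rw [lintegral_const_mul _ (hmeas h.measurable_right)]; ring
    _ ≤ _ := add_le_add (mul_le_mul_right (lintegral_mono (hprod hq₀)) _)
        (add_le_add le_rfl (mul_le_of_le_one_left' hcT))

lemma exists_isPureDPPair_of_mul_le {p q₀ : α → ℝ≥0∞} (hp : Measurable p)
    (hq₀ : Measurable q₀) (hq₀_fin : ∀ a, q₀ a ≠ ∞) (hq₀₁ : ∫⁻ a, q₀ a ∂ν = 1) (hε : 0 ≤ ε)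
    {c : ℝ≥0∞} (hc : c ≠ 0) (hc_top : c ≠ ∞)
    (hq₀p : ∀ a, c * q₀ a ≤ ENNReal.ofReal (exp ε) * p a)
    (hmass : 1 ≤ ∫⁻ a, min (p a / c) (ENNReal.ofReal (exp ε) * q₀ a) ∂ν) :
    ∃ p₀, IsPureDPPair ν ε p₀ q₀ ∧ ∀ a, c * p₀ a ≤ p a := by
  set K := ENNReal.ofReal (exp ε)
  have hK : 1 ≤ K := ENNReal.one_le_ofReal.2 (one_le_exp hε)
  have hKK : K * K⁻¹ = 1 :=
    ENNReal.mul_inv_cancel (zero_lt_one.trans_le hK).ne' ENNReal.ofReal_ne_top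
  have hℓu (a : α) : K⁻¹ * q₀ a ≤ min (p a / c) (K * q₀ a) := by
    refine le_min ?_ (mul_le_mul_left ((ENNReal.inv_le_one.2 hK).trans hK) _)
    rw [ENNReal.le_div_iff_mul_le (Or.inl hc) (Or.inl hc_top), mul_assoc, mul_comm _ c]
    calc K⁻¹ * (c * q₀ a) ≤ K⁻¹ * (K * p a) := mul_le_mul_right (hq₀p a) _
      _ = p a := by rw [← mul_assoc, mul_comm K⁻¹, hKK, one_mul]
  have hu_fin : ∫⁻ a, min (p a / c) (K * q₀ a) ∂ν ≠ ∞ := by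
    refine ne_top_of_le_ne_top ?_ (lintegral_mono fun a => min_le_right _ _)
    rw [lintegral_const_mul _ hq₀, hq₀₁, mul_one]
    exact ENNReal.ofReal_ne_top
  obtain ⟨p₀, hp₀, hℓp₀, hp₀u, hp₀₁⟩ := exists_between_lintegral_eq (hq₀.const_mul K⁻¹)
    ((hp.div_const c).min (hq₀.const_mul K)) hℓu
    (by rw [lintegral_const_mul _ hq₀, hq₀₁, mul_one]; exact ENNReal.inv_le_one.2 hK) hmass hu_fin
  have hp₀q₀ (a : α) : p₀ a ≤ K * q₀ a := (hp₀u a).trans (min_le_right _ _)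
  refine ⟨p₀, ⟨hp₀, hq₀, fun a => ne_top_of_le_ne_top
    (ENNReal.mul_ne_top ENNReal.ofReal_ne_top (hq₀_fin a)) (hp₀q₀ a), hq₀_fin,
    hp₀₁, hq₀₁, hp₀q₀, fun a => ?_⟩, fun a => ?_⟩
  · calc q₀ a = K * (K⁻¹ * q₀ a) := by rw [← mul_assoc, hKK, one_mul]
      _ ≤ K * p₀ a := mul_le_mul_right (hℓp₀ a) _
  · calc c * p₀ a ≤ c * (p a / c) := mul_le_mul_right ((hp₀u a).trans (min_le_left _ _)) _
      _ = p a := ENNReal.mul_div_cancel hc hc_top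

lemma exists_isPureDPPair_of_le {p q : α → ℝ≥0∞} (hp : Measurable p) (hq : Measurable q)
    (hq_fin : ∀ a, q a ≠ ∞) (hq₁ : ∫⁻ a, q a ∂ν = 1) (hε : 0 ≤ ε) {c : ℝ≥0∞} (hc : c ≠ 0)
    (hcq : c ≤ ∫⁻ a, min (q a) (ENNReal.ofReal (exp ε) * p a) ∂ν)
    (hqp : ∫⁻ a, min (q a) (ENNReal.ofReal (exp ε) * p a) ∂ν
      ≤ ∫⁻ a, min (p a) (ENNReal.ofReal (exp ε) * q a) ∂ν) :
    ∃ p₀ q₀, IsPureDPPair ν ε p₀ q₀ ∧ (∀ a, c * p₀ a ≤ p a) ∧ (∀ a, c * q₀ a ≤ q a) := by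
  set K := ENNReal.ofReal (exp ε)
  have hK : 1 ≤ K := ENNReal.one_le_ofReal.2 (one_le_exp hε)
  set m := ∫⁻ a, min (q a) (K * p a) ∂ν
  have hm₀ : m ≠ 0 := (pos_iff_ne_zero.2 hc).trans_le hcq |>.ne'
  have hm_top : m ≠ ∞ := ne_top_of_le_ne_top (hq₁ ▸ ENNReal.one_ne_top)
    (lintegral_mono fun a => min_le_left _ _)
  set q₀ := fun a => min (q a) (K * p a) / m
  have hcq₀ (a : α) : c * q₀ a ≤ min (q a) (K * p a) :=
    (mul_le_mul_left hcq _).trans_eq (ENNReal.mul_div_cancel hm₀ hm_top)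
  have hq₀₁ : ∫⁻ a, q₀ a ∂ν = 1 := by
    simp_rw [q₀, div_eq_mul_inv]
    rw [lintegral_mul_const _ (hq.min (hp.const_mul K)), ENNReal.mul_inv_cancel hm₀ hm_top]
  have hmass : 1 ≤ ∫⁻ a, min (p a / c) (K * q₀ a) ∂ν := by
    have hpt (a : α) : min (p a) (K * q a) / m ≤ min (p a / c) (K * q₀ a) := by
      refine le_min ((ENNReal.div_le_div_right (min_le_left _ _) _).trans
        (ENNReal.div_le_div_left hcq _)) ?_
      rw [← mul_div_assoc, mul_min]
      refine ENNReal.div_le_div_right (le_min (min_le_right _ _) ?_) _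
      calc min (p a) (K * q a) ≤ 1 * (1 * p a) := by rw [one_mul, one_mul]; exact min_le_left _ _
        _ ≤ K * (K * p a) := by gcongr
    calc 1 ≤ (∫⁻ a, min (p a) (K * q a) ∂ν) / m := by
          rwa [ENNReal.le_div_iff_mul_le (Or.inl hm₀) (Or.inl hm_top), one_mul]
      _ = ∫⁻ a, min (p a) (K * q a) / m ∂ν := by
          simp_rw [div_eq_mul_inv]; rw [lintegral_mul_const _ (hp.min (hq.const_mul K))]
      _ ≤ _ := lintegral_mono hpt
  obtain ⟨p₀, h₀, hp₀⟩ := exists_isPureDPPair_of_mul_le hp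
    ((hq.min (hp.const_mul K)).div_const m)
    (fun a => (ENNReal.div_lt_top (ne_top_of_le_ne_top (hq_fin a) (min_le_left _ _)) hm₀).ne)
    hq₀₁ hε hc (ne_top_of_le_ne_top hm_top hcq) (fun a => (hcq₀ a).trans (min_le_right _ _)) hmass
  exact ⟨p₀, q₀, h₀, hp₀, fun a => (hcq₀ a).trans (min_le_left _ _)⟩

theorem exists_isPureDPPair {p q : α → ℝ≥0∞} (hp : Measurable p) (hq : Measurable q)
    (hp_fin : ∀ a, p a ≠ ∞) (hq_fin : ∀ a, q a ≠ ∞) (hp₁ : ∫⁻ a, p a ∂ν = 1)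
    (hq₁ : ∫⁻ a, q a ∂ν = 1) (hε : 0 ≤ ε) {δ : ℝ≥0∞} (hδ : δ < 1)
    (hpq : ∀ s, MeasurableSet s →
      ∫⁻ a in s, p a ∂ν ≤ ENNReal.ofReal (exp ε) * ∫⁻ a in s, q a ∂ν + δ)
    (hqp : ∀ s, MeasurableSet s →
      ∫⁻ a in s, q a ∂ν ≤ ENNReal.ofReal (exp ε) * ∫⁻ a in s, p a ∂ν + δ) :
    ∃ p₀ q₀, IsPureDPPair ν ε p₀ q₀ ∧ (∀ a, (1 - δ) * p₀ a ≤ p a) ∧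
      (∀ a, (1 - δ) * q₀ a ≤ q a) := by
  have hc : 1 - δ ≠ 0 := (tsub_pos_of_lt hδ).ne'
  rcases le_total (∫⁻ a, min (q a) (ENNReal.ofReal (exp ε) * p a) ∂ν)
    (∫⁻ a, min (p a) (ENNReal.ofReal (exp ε) * q a) ∂ν) with h | h
  · exact exists_isPureDPPair_of_le hp hq hq_fin hq₁ hε hc
      (tsub_le_iff_right.2 (hq₁ ▸ lintegral_le_lintegral_min_add hq hp hqp)) h
  · obtain ⟨q₀, p₀, h₀, hq₀, hp₀⟩ := exists_isPureDPPair_of_le hq hp hp_fin hp₁ hε hc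
      (tsub_le_iff_right.2 (hp₁ ▸ lintegral_le_lintegral_min_add hp hq hpq)) h
    exact ⟨p₀, q₀, h₀.symm, hp₀, hq₀⟩

theorem pi_apply_le_of_forall_le {P Q : Measure α} [IsProbabilityMeasure P]
    [IsProbabilityMeasure Q] (hε : 0 ≤ ε) {δ : ℝ≥0∞}
    (hPQ : ∀ s, MeasurableSet s → P s ≤ ENNReal.ofReal (exp ε) * Q s + δ)
    (hQP : ∀ s, MeasurableSet s → Q s ≤ ENNReal.ofReal (exp ε) * P s + δ)
    {T : ℕ} (hT : 0 < T) {δ' : ℝ} (hδ'₀ : 0 < δ') (hδ'₁ : δ' ≤ 1) (S : Set (Fin T → α)) :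
    Measure.pi (fun _ => P) S ≤ ENNReal.ofReal (exp (advancedCompositionEps T ε δ')) *
      Measure.pi (fun _ => Q) S + (T * δ + ENNReal.ofReal δ') := by
  rcases lt_or_ge δ 1 with hδ | hδ
  swap
  · calc Measure.pi (fun _ => P) S ≤ 1 := prob_le_one
      _ ≤ T * δ := one_le_mul (Nat.one_le_cast.2 hT) hδ
      _ ≤ _ := le_add_left le_self_add
  obtain ⟨ν, hν, p, q, hp, hq, hp_fin, hq_fin, rfl, rfl⟩ :=
    exists_isProbabilityMeasure_withDensity_eq P Q
  have hp₁ : ∫⁻ a, p a ∂ν = 1 := by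
    rw [← setLIntegral_univ, ← withDensity_apply' p, measure_univ]
  have hq₁ : ∫⁻ a, q a ∂ν = 1 := by
    rw [← setLIntegral_univ, ← withDensity_apply' q, measure_univ]
  simp only [withDensity_apply'] at hPQ hQP
  obtain ⟨p₀, q₀, h, hp₀, hq₀⟩ := exists_isPureDPPair hp hq hp_fin hq_fin hp₁ hq₁ hε hδ hPQ hQP
  rw [Measure.pi_withDensity _ (fun _ => hp) (fun _ => hp₁ ▸ ENNReal.one_ne_top),
    Measure.pi_withDensity _ (fun _ => hq) (fun _ => hq₁ ▸ ENNReal.one_ne_top),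
    withDensity_apply', withDensity_apply']
  refine (h.setLIntegral_pi_le_of_mul_le hε hT hδ'₀ hδ'₁ hp hp₁ tsub_le_self hp₀ hq₀ S).trans ?_
  gcongr
  exact ENNReal.one_sub_one_sub_pow_le δ T

end DifferentialPrivacy

/-- advanced composition, privacy part of Theorem 4.1.
If `M` is `(ε,δ)`-DP, then for every `δ' ∈ (0,1)` the `T`-fold product mechanism
`d ↦ (M d)^{⊗T}` is `(Tε² + ε√(2T ln(1/δ')), Tδ + δ')`-DP. -/
theorem stmt_12 {D R : Type*} [DecidableEq D] [MeasurableSpace R] {n : ℕ}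
    (M : (Fin n → D) → Measure R) [∀ d, IsProbabilityMeasure (M d)]
    (ε δ : ℝ) (hε : 0 ≤ ε) (hδ : 0 ≤ δ)
    (hDP : ∀ d d' : Fin n → D, hammingDist d d' = 1 →
      ∀ S : Set R, M d S ≤ ENNReal.ofReal (Real.exp ε) * M d' S + ENNReal.ofReal δ)
    (T : ℕ) (hT : 1 ≤ T) :
    ∀ δ' : ℝ, δ' ∈ Set.Ioo (0 : ℝ) 1 →
      ∀ d d' : Fin n → D, hammingDist d d' = 1 →
        ∀ S : Set (Fin T → R),
          Measure.pi (fun _ : Fin T => M d) S ≤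
            ENNReal.ofReal (Real.exp (T * ε ^ 2 + ε * Real.sqrt (2 * T * Real.log (1 / δ')))) *
              Measure.pi (fun _ : Fin T => M d') S
              + ENNReal.ofReal (T * δ + δ') := by
  intro δ' hδ' d d' hdd S
  have hd'd : hammingDist d' d = 1 := by rwa [hammingDist_comm]
  calc Measure.pi (fun _ : Fin T => M d) S
      ≤ ENNReal.ofReal (exp (advancedCompositionEps T ε δ')) * Measure.pi (fun _ => M d') S
          + (T * ENNReal.ofReal δ + ENNReal.ofReal δ') :=
        pi_apply_le_of_forall_le hε (fun s _ => hDP d d' hdd s) (fun s _ => hDP d' d hd'd s) hT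
          hδ'.1 hδ'.2.le S
    _ = _ := by
        rw [ENNReal.ofReal_add (by positivity) hδ'.1.le, ENNReal.ofReal_mul (Nat.cast_nonneg T),
          ENNReal.ofReal_natCast]
        rfl
end
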